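/- arXiv:1905.06468 — 5 statements merged into one kernel-verified Lean document; each statement's English description precedes it below -/
import Mathlib

section
/- Let R > 0, L > 0, π > 0, s > 0 be real numbers with 2Rπ > L, and let α be a real number with α ≥ ln(2Rπ/L) and α > 0. Then for every real y, the solar-regime price p₁(y) = (L/(2R))·(2Rπ/L)^(y/s) satisfies p₁(y) − 0 ≥ (1/α)·s·(p₁(y)·ln(2Rπ/L)/s). (This is the Differential Allocation–Payment Relationship (p(y) − f'(y))·dy ≥ (1/α)·f*'(p(y))·dp in the regime y < s, where the cost derivative is f' = 0 and the conjugate derivative is f*' = s.) -/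
theorem solar_differential_allocation_payment_general
    (R L π s α : ℝ) (hR : 0 < R) (hL : 0 < L) (hπ : 0 < π) (hs : 0 < s)
    (hα : Real.log (2 * R * π / L) ≤ α) (hα0 : 0 < α) (y : ℝ) :
    L / (2 * R) * (2 * R * π / L) ^ (y / s) - 0 ≥
      (1 / α) * s *
        ((L / (2 * R) * (2 * R * π / L) ^ (y / s)) * Real.log (2 * R * π / L) / s) := by
  set p := L / (2 * R) * (2 * R * π / L) ^ (y / s)
  have hp : 0 ≤ p := by positivity
  rw [sub_zero, ge_iff_le]
  calc (1 / α) * s * (p * Real.log (2 * R * π / L) / s)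
      = p * (Real.log (2 * R * π / L) / α) := by field_simp
    _ ≤ p := mul_le_of_le_one_right hp ((div_le_one hα0).2 hα)

/-- Differential Allocation–Payment Relationship in the solar regime:
with cost derivative `0` and conjugate derivative `s`, the price
`p₁(y) = (L/(2R))·(2Rπ/L)^(y/s)` satisfies
`p₁(y) − 0 ≥ (1/α)·s·(p₁(y)·ln(2Rπ/L)/s)` whenever `α ≥ ln(2Rπ/L)` and `α > 0`. -/
theorem solar_differential_allocation_payment
    (R L π s α : ℝ) (hR : 0 < R) (hL : 0 < L) (hπ : 0 < π) (hs : 0 < s)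
    (hbase : L < 2 * R * π) (hα : Real.log (2 * R * π / L) ≤ α) (hα0 : 0 < α) (y : ℝ) :
    L / (2 * R) * (2 * R * π / L) ^ (y / s) - 0 ≥
      (1 / α) * s *
        ((L / (2 * R) * (2 * R * π / L) ^ (y / s)) * Real.log (2 * R * π / L) / s) :=
  solar_differential_allocation_payment_general R L π s α hR hL hπ hs hα hα0 y
end

section
/- Let R > 0, L > 0, π > 0, s > 0 be real numbers with 2Rπ > L, and let α be a real number with α ≥ ln(2Rπ/L). Then for all real numbers y₀ ≤ y₁ the solar-regime price p₁(y) = (L/(2R))·(2Rπ/L)^(y/s) satisfies ∫_{y₀}^{y₁} p₁(y) dy ≥ (1/α)·(s·p₁(y₁) − s·p₁(y₀)). (Integrated allocation–payment inequality: the payment collected as demand rises from y₀ to y₁ covers a 1/α fraction of the increase of the Fenchel conjugate f*(p) = s·p along the price path, the operational cost being zero in this regime.) -/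
lemma exp_integral (c a b : ℝ) (hc : c ≠ 0) :
    (∫ y in a..b, Real.exp (c * y)) = (Real.exp (c * b) - Real.exp (c * a)) / c := by
  rw [intervalIntegral.integral_comp_mul_left (fun x => Real.exp x) hc, integral_exp]
  rw [smul_eq_mul]
  field_simp

/-- Integrated allocation–payment inequality in the solar regime: for
`y₀ ≤ y₁`, the payment `∫_{y₀}^{y₁} p₁(y) dy` collected from the price
`p₁(y) = (L/(2R))·(2Rπ/L)^(y/s)` covers a `1/α` fraction of the increase
of the Fenchel conjugate `f*(p) = s·p` along the price path. -/
theorem solar_integrated_allocation_payment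
    (R L π s α : ℝ) (hR : 0 < R) (hL : 0 < L) (hπ : 0 < π) (hs : 0 < s)
    (hbase : L < 2 * R * π) (hα : Real.log (2 * R * π / L) ≤ α)
    (y₀ y₁ : ℝ) (hy : y₀ ≤ y₁) :
    (∫ y in y₀..y₁, L / (2 * R) * (2 * R * π / L) ^ (y / s)) ≥
      (1 / α) * (s * (L / (2 * R) * (2 * R * π / L) ^ (y₁ / s))
        - s * (L / (2 * R) * (2 * R * π / L) ^ (y₀ / s))) := by
  set b := 2 * R * π / L with hbdef
  have hb1 : 1 < b := (one_lt_div hL).mpr hbase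
  have hb0 : 0 < b := lt_trans one_pos hb1
  have hlb : 0 < Real.log b := Real.log_pos hb1
  have hα0 : 0 < α := lt_of_lt_of_le hlb hα
  have hc : Real.log b / s ≠ 0 := by positivity
  have hrw : ∀ y : ℝ, b ^ (y / s) = Real.exp ((Real.log b / s) * y) := by
    intro y
    rw [Real.rpow_def_of_pos hb0]
    congr 1
    field_simp
  have hint : (∫ y in y₀..y₁, L / (2 * R) * b ^ (y / s))
      = L / (2 * R) * ((Real.exp ((Real.log b / s) * y₁)
        - Real.exp ((Real.log b / s) * y₀)) / (Real.log b / s)) := by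
    simp_rw [hrw]
    rw [intervalIntegral.integral_const_mul, exp_integral _ _ _ hc]
  rw [ge_iff_le, hint, hrw y₀, hrw y₁]
  set E₀ := Real.exp ((Real.log b / s) * y₀) with hE0
  set E₁ := Real.exp ((Real.log b / s) * y₁) with hE1
  have hE : E₀ ≤ E₁ := by
    apply Real.exp_le_exp.mpr
    apply mul_le_mul_of_nonneg_left hy
    positivity
  have h1 : 1 / α ≤ 1 / Real.log b := one_div_le_one_div_of_le hlb hα
  have key : (1 / α) * (E₁ - E₀) ≤ (1 / Real.log b) * (E₁ - E₀) :=
    mul_le_mul_of_nonneg_right h1 (by linarith)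
  have hmul := mul_le_mul_of_nonneg_left key (by positivity : (0:ℝ) ≤ s * (L / (2 * R)))
  have h2 : L / (2 * R) * ((E₁ - E₀) / (Real.log b / s))
      = s * (L / (2 * R)) * ((1 / Real.log b) * (E₁ - E₀)) := by
    field_simp
  rw [h2]
  calc (1/α) * (s * (L / (2 * R) * E₁) - s * (L / (2 * R) * E₀))
      = s * (L / (2 * R)) * ((1 / α) * (E₁ - E₀)) := by ring
    _ ≤ _ := hmul
end

section
/- Let R > 0, s > 0, G > 0 and let π, L, U be real numbers with π < L, π < U, and 2R(U−π) > L−π, and let α be a real number with α ≥ ln((2R(U−π))/(L−π)). Then for all real numbers y₀ ≤ y₁ the grid-regime price p₂(y) = ((L−π)/(2R))·((2R(U−π))/(L−π))^(y/(s+G)) + π satisfies ∫_{y₀}^{y₁} (p₂(y) − π) dy ≥ (1/α)·(s+G)·(p₂(y₁) − p₂(y₀)). (Integrated allocation–payment inequality: payment minus operational cost covers a 1/α fraction of the increase of the Fenchel conjugate f*(p) = (s+G)·p − G·π along the price path.) -/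
/-! `p₂ − π` is the exponential `c · b ^ (y / (s + G))` with `b > 1`, so its integral over `[y₀, y₁]` is
exactly `(s + G) / log b` times its increase; the claim then reduces to `1 / α ≤ 1 / log b`. -/

namespace Real

theorem integral_const_rpow {b : ℝ} (hb₀ : 0 < b) (hb₁ : b ≠ 1) (x₀ x₁ : ℝ) :
    ∫ x in x₀..x₁, b ^ x = (b ^ x₁ - b ^ x₀) / log b := by
  have hlog : log b ≠ 0 := log_ne_zero_of_pos_of_ne_one hb₀ hb₁
  have hderiv (x : ℝ) : HasDerivAt (fun x => b ^ x / log b) (b ^ x) x := by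
    simpa [hlog] using (hasStrictDerivAt_const_rpow hb₀ x).hasDerivAt.div_const (log b)
  rw [intervalIntegral.integral_eq_sub_of_hasDerivAt (fun x _ => hderiv x)
    ((continuous_const_rpow hb₀.ne').intervalIntegrable _ _), sub_div]

theorem integral_const_rpow_div {b : ℝ} (hb₀ : 0 < b) (hb₁ : b ≠ 1) {T : ℝ} (hT : T ≠ 0)
    (y₀ y₁ : ℝ) :
    ∫ y in y₀..y₁, b ^ (y / T) = T / log b * (b ^ (y₁ / T) - b ^ (y₀ / T)) := by
  rw [intervalIntegral.integral_comp_div (b ^ ·) hT, integral_const_rpow hb₀ hb₁, smul_eq_mul,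
    mul_div_assoc']
  ring

end Real

theorem grid_integrated_allocation_payment_general
    (R s G π L U α : ℝ) (hR : 0 < R) (hs : 0 < s) (hG : 0 < G)
    (hπL : π < L) (hbase : L - π < 2 * R * (U - π))
    (hα : Real.log (2 * R * (U - π) / (L - π)) ≤ α)
    (y₀ y₁ : ℝ) (hy : y₀ ≤ y₁) :
    (∫ y in y₀..y₁,
        (((L - π) / (2 * R) * (2 * R * (U - π) / (L - π)) ^ (y / (s + G)) + π) - π)) ≥
      (1 / α) * (s + G) *
        (((L - π) / (2 * R) * (2 * R * (U - π) / (L - π)) ^ (y₁ / (s + G)) + π)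
          - ((L - π) / (2 * R) * (2 * R * (U - π) / (L - π)) ^ (y₀ / (s + G)) + π)) := by
  set b := 2 * R * (U - π) / (L - π)
  set c := (L - π) / (2 * R)
  have hLπ : 0 < L - π := sub_pos.2 hπL
  have hb : 1 < b := (one_lt_div hLπ).2 hbase
  have hlog : 0 < Real.log b := Real.log_pos hb
  have hT : 0 < s + G := add_pos hs hG
  have hrise : 0 ≤ b ^ (y₁ / (s + G)) - b ^ (y₀ / (s + G)) :=
    sub_nonneg.2 (Real.rpow_le_rpow_of_exponent_le hb.le (div_le_div_of_nonneg_right hy hT.le))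
  simp only [add_sub_cancel_right, add_sub_add_right_eq_sub]
  rw [intervalIntegral.integral_const_mul,
    Real.integral_const_rpow_div (zero_lt_one.trans hb) hb.ne' hT.ne']
  calc 1 / α * (s + G) * (c * b ^ (y₁ / (s + G)) - c * b ^ (y₀ / (s + G)))
      = c * ((s + G) / α * (b ^ (y₁ / (s + G)) - b ^ (y₀ / (s + G)))) := by ring
    _ ≤ c * ((s + G) / Real.log b * (b ^ (y₁ / (s + G)) - b ^ (y₀ / (s + G)))) := by gcongr

/-- Integrated allocation–payment inequality in the grid regime: for
`y₀ ≤ y₁`, payment minus operational cost, `∫_{y₀}^{y₁} (p₂(y) − π) dy`,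
covers a `1/α` fraction of the increase of the Fenchel conjugate
`f*(p) = (s+G)·p − G·π` along the price path, where
`p₂(y) = ((L−π)/(2R))·(2R(U−π)/(L−π))^(y/(s+G)) + π`. -/
theorem grid_integrated_allocation_payment
    (R s G π L U α : ℝ) (hR : 0 < R) (hs : 0 < s) (hG : 0 < G)
    (hπL : π < L) (hπU : π < U) (hbase : L - π < 2 * R * (U - π))
    (hα : Real.log (2 * R * (U - π) / (L - π)) ≤ α)
    (y₀ y₁ : ℝ) (hy : y₀ ≤ y₁) :
    (∫ y in y₀..y₁,
        (((L - π) / (2 * R) * (2 * R * (U - π) / (L - π)) ^ (y / (s + G)) + π) - π)) ≥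
      (1 / α) * (s + G) *
        (((L - π) / (2 * R) * (2 * R * (U - π) / (L - π)) ^ (y₁ / (s + G)) + π)
          - ((L - π) / (2 * R) * (2 * R * (U - π) / (L - π)) ^ (y₀ / (s + G)) + π)) :=
  grid_integrated_allocation_payment_general R s G π L U α hR hs hG hπL hbase hα y₀ y₁ hy
end

section
/- Let R > 0, C > 0, L_c > 0, U_c be real numbers with 2R·U_c > L_c, and let α be a real number with α ≥ ln((2R·U_c)/L_c). Then for all real numbers y₀ ≤ y₁ the cable price p_c(y) = (L_c/(2R))·((2R·U_c)/L_c)^(y/C) satisfies ∫_{y₀}^{y₁} p_c(y) dy ≥ (1/α)·C·(p_c(y₁) − p_c(y₀)). (Integrated allocation–payment inequality for a zero-cost capacity-limited resource.) -/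
/-- Integrated allocation–payment inequality for the zero-cost, capacity-limited
cable resource: for `y₀ ≤ y₁`, `∫_{y₀}^{y₁} p_c(y) dy ≥ (1/α)·C·(p_c(y₁) − p_c(y₀))`
where `p_c(y) = (L_c/(2R))·((2R·U_c)/L_c)^(y/C)`. -/
theorem cable_integrated_allocation_payment
    (R C Lc Uc α : ℝ) (hR : 0 < R) (hC : 0 < C) (hLc : 0 < Lc)
    (hbase : Lc < 2 * R * Uc)
    (hα : Real.log (2 * R * Uc / Lc) ≤ α)
    (y₀ y₁ : ℝ) (hy : y₀ ≤ y₁) :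
    (∫ y in y₀..y₁, Lc / (2 * R) * (2 * R * Uc / Lc) ^ (y / C)) ≥
      (1 / α) * C * (Lc / (2 * R) * (2 * R * Uc / Lc) ^ (y₁ / C)
        - Lc / (2 * R) * (2 * R * Uc / Lc) ^ (y₀ / C)) := by
  set b : ℝ := 2 * R * Uc / Lc with hbdef
  have hb1 : 1 < b := (one_lt_div hLc).mpr hbase
  have hb0 : 0 < b := lt_trans one_pos hb1
  have hlb : 0 < Real.log b := Real.log_pos hb1
  have hK : 0 < Lc / (2 * R) := div_pos hLc (by linarith)
  set K : ℝ := Lc / (2 * R) with hKdef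
  -- derivative
  have hderiv : ∀ y : ℝ, HasDerivAt (fun y : ℝ => K * (C / Real.log b) * b ^ (y / C))
      (K * b ^ (y / C)) y := by
    intro y
    have h1 : HasDerivAt (fun y : ℝ => y / C) (1 / C) y :=
      (hasDerivAt_id y).div_const C |>.congr_deriv (by simp)
    have h2 : HasDerivAt (fun t : ℝ => b ^ t) (b ^ (y / C) * Real.log b) (y / C) :=
      (Real.hasStrictDerivAt_const_rpow hb0 (y / C)).hasDerivAt
    have h3 : HasDerivAt (fun y : ℝ => b ^ (y / C))
        (b ^ (y / C) * Real.log b * (1 / C)) y := h2.comp y h1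
    have h4 := h3.const_mul (K * (C / Real.log b))
    refine h4.congr_deriv ?_
    rw [show K * (C / Real.log b) * (b ^ (y / C) * Real.log b * (1 / C)) = K * b ^ (y / C) * (C / C) * (Real.log b / Real.log b) by ring, div_self hC.ne', div_self hlb.ne']
    ring
  have hcont : Continuous fun y : ℝ => K * b ^ (y / C) :=
    continuous_const.mul <| (continuous_const.rpow (continuous_id.div_const C)
      (fun _ => Or.inl (ne_of_gt hb0)))
  have hint : (∫ y in y₀..y₁, K * b ^ (y / C)) =
      K * (C / Real.log b) * b ^ (y₁ / C) - K * (C / Real.log b) * b ^ (y₀ / C) :=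
    intervalIntegral.integral_eq_sub_of_hasDerivAt (fun y _ => hderiv y)
      (hcont.intervalIntegrable y₀ y₁)
  rw [hint]
  have hD : (0:ℝ) ≤ b ^ (y₁ / C) - b ^ (y₀ / C) := by
    have hyc : y₀ / C ≤ y₁ / C := by gcongr
    have := Real.rpow_le_rpow_left_iff (x := b) hb1 |>.mpr hyc
    linarith
  have hα0 : 0 < α := lt_of_lt_of_le hlb hα
  have h1α : 1 / α ≤ 1 / Real.log b := by
    apply div_le_div_of_nonneg_left one_pos.le hlb hα
  have key : (1 / α) * C * (K * b ^ (y₁ / C) - K * b ^ (y₀ / C)) ≤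
      (1 / Real.log b) * C * (K * b ^ (y₁ / C) - K * b ^ (y₀ / C)) := by
    have hfac : 0 ≤ K * b ^ (y₁ / C) - K * b ^ (y₀ / C) := by nlinarith
    have : 0 ≤ C * (K * b ^ (y₁ / C) - K * b ^ (y₀ / C)) := by positivity
    nlinarith [mul_le_mul_of_nonneg_right h1α this]
  calc (1 / α) * C * (K * b ^ (y₁ / C) - K * b ^ (y₀ / C))
      ≤ (1 / Real.log b) * C * (K * b ^ (y₁ / C) - K * b ^ (y₀ / C)) := key
    _ = K * (C / Real.log b) * b ^ (y₁ / C) - K * (C / Real.log b) * b ^ (y₀ / C) := by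
        field_simp
end

section
/- Let R > 0, L > 0, π > 0 be real numbers, let s̲ and s̄ be real numbers with 0 < s̲ ≤ s̄, suppose 2Rπ > L, and let α be a real number with α ≥ (s̄/s̲)·ln(2Rπ/L). Then for all real numbers y₀ ≤ y₁ the conservative solar-regime price p̲₁(y) = (L/(2R))·(2Rπ/L)^(y/s̲) satisfies ∫_{y₀}^{y₁} p̲₁(y) dy ≥ (1/α)·s̄·(p̲₁(y₁) − p̲₁(y₀)). (Integrated allocation–payment inequality under conservative solar pricing: the payment collected covers a 1/α fraction of the conjugate increase computed with the solar upper bound s̄.) -/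
/-!
The price `y ↦ c · b ^ (y / s̲)` is an exponential with rate `log b / s̲`, so its integral over
`[y₀, y₁]` is its increase divided by that rate. The hypothesis on `α` says precisely that
`s̄ / α` is at most the reciprocal rate `s̲ / log b`, and the increase is nonnegative since `b > 1`.
-/

-- Scoped: opening `Real` would turn the binder `π` of the main theorem into `Real.pi`.
section
open Real

theorem rpow_div_eq_exp_mul {b : ℝ} (hb : 0 < b) (y s : ℝ) :
    b ^ (y / s) = exp (y * (log b / s)) := by
  rw [rpow_def_of_pos hb]; ring_nf

theorem integral_rpow_div {b s : ℝ} (hb : 0 < b) (hb1 : b ≠ 1) (hs : s ≠ 0) (a c : ℝ) :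
    ∫ y in a..c, b ^ (y / s) = s / log b * (b ^ (c / s) - b ^ (a / s)) := by
  have hk : log b / s ≠ 0 := div_ne_zero (log_ne_zero_of_pos_of_ne_one hb hb1) hs
  simp_rw [rpow_div_eq_exp_mul hb]
  rw [intervalIntegral.integral_comp_mul_right exp hk, integral_exp, smul_eq_mul, inv_div]

theorem one_div_mul_le_div_of_div_mul_le {s S ℓ α : ℝ} (hs : 0 < s) (hS : 0 < S) (hℓ : 0 < ℓ)
    (hα : S / s * ℓ ≤ α) : 1 / α * S ≤ s / ℓ := by
  have hα0 : 0 < α := (by positivity : 0 < S / s * ℓ).trans_le hα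
  rw [one_div_mul_eq_div, div_le_div_iff₀ hα0 hℓ]
  calc S * ℓ = S / s * ℓ * s := by field_simp
    _ ≤ α * s := by gcongr
    _ = s * α := mul_comm _ _

end

theorem conservative_solar_integrated_allocation_payment_general
    (R L π slo shi α : ℝ) (hR : 0 < R) (hL : 0 < L)
    (hslo : 0 < slo) (hle : slo ≤ shi)
    (hbase : L < 2 * R * π)
    (hα : shi / slo * Real.log (2 * R * π / L) ≤ α)
    (y₀ y₁ : ℝ) (hy : y₀ ≤ y₁) :
    (∫ y in y₀..y₁, L / (2 * R) * (2 * R * π / L) ^ (y / slo)) ≥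
      (1 / α) * shi * (L / (2 * R) * (2 * R * π / L) ^ (y₁ / slo)
        - L / (2 * R) * (2 * R * π / L) ^ (y₀ / slo)) := by
  set b := 2 * R * π / L
  set c := L / (2 * R)
  have hb : 1 < b := (one_lt_div hL).2 hbase
  have hrise : 0 ≤ b ^ (y₁ / slo) - b ^ (y₀ / slo) :=
    sub_nonneg.2 <|
      Real.rpow_le_rpow_of_exponent_le hb.le (div_le_div_of_nonneg_right hy hslo.le)
  have hrate : 1 / α * shi ≤ slo / Real.log b :=
    one_div_mul_le_div_of_div_mul_le hslo (hslo.trans_le hle) (Real.log_pos hb) hα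
  rw [intervalIntegral.integral_const_mul,
    integral_rpow_div (zero_lt_one.trans hb) hb.ne' hslo.ne', ge_iff_le, ← mul_sub]
  calc 1 / α * shi * (c * (b ^ (y₁ / slo) - b ^ (y₀ / slo)))
      ≤ slo / Real.log b * (c * (b ^ (y₁ / slo) - b ^ (y₀ / slo))) := by gcongr
    _ = c * (slo / Real.log b * (b ^ (y₁ / slo) - b ^ (y₀ / slo))) := by ring

/-- Integrated allocation–payment inequality under conservative solar pricing:
for `y₀ ≤ y₁`, the payment collected from the conservative solar-regime price
`p̲₁(y) = (L/(2R))·(2Rπ/L)^(y/s̲)` covers a `1/α` fraction of the conjugate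
increase computed with the solar upper bound `s̄`. -/
theorem conservative_solar_integrated_allocation_payment
    (R L π slo shi α : ℝ) (hR : 0 < R) (hL : 0 < L) (hπ : 0 < π)
    (hslo : 0 < slo) (hle : slo ≤ shi)
    (hbase : L < 2 * R * π)
    (hα : shi / slo * Real.log (2 * R * π / L) ≤ α)
    (y₀ y₁ : ℝ) (hy : y₀ ≤ y₁) :
    (∫ y in y₀..y₁, L / (2 * R) * (2 * R * π / L) ^ (y / slo)) ≥
      (1 / α) * shi * (L / (2 * R) * (2 * R * π / L) ^ (y₁ / slo)
        - L / (2 * R) * (2 * R * π / L) ^ (y₀ / slo)) :=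
  conservative_solar_integrated_allocation_payment_general R L π slo shi α hR hL hslo hle hbase hα
    y₀ y₁ hy
end
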